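/- arXiv:2301.07948 — 6 statements merged into one kernel-verified Lean document; each statement's English description precedes it below -/
import Mathlib

section
/- Let R be a ring and let m > n be two fixed positive integers. Then the following are equivalent: (1) x^m = x^n for all x ∈ R; (2) every element x ∈ R can be written as x = a + b where a^n = 0, b^(m−n+1) = b, a·b = b·a = 0, and moreover the characteristic of R is finite (ringChar R ≠ 0). -/
/-!
For `s ≥ n` the powers `x ^ s` are periodic with period `k = m - n`. For the multiple `N = n * k`
of the period, `N ≥ n`, split `x = x * (1 - x ^ N) + x ^ (N + 1)`: the first part is nilpotent
because `x ^ n * x ^ N = x ^ n`, the second is `(k + 1)`-potent, and both products of the parts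
vanish because `x ^ (2 * N + 2) = x ^ (N + 2)`. Conversely, when `a * b = b * a = 0` the positive
powers of `a + b` are `a ^ j + b ^ j`. The characteristic is finite because `2 ^ m = 2 ^ n` in `R`.
-/

section Monoid

variable {M : Type*} [Monoid M] {x : M} {n k : ℕ}

theorem pow_add_eq_pow_of_pow_add_eq (h : x ^ (n + k) = x ^ n) {s : ℕ} (hs : n ≤ s) :
    x ^ (s + k) = x ^ s := by
  obtain ⟨d, rfl⟩ := Nat.exists_eq_add_of_le hs
  rw [add_right_comm, pow_add, h, ← pow_add]

theorem pow_add_mul_eq_pow_of_pow_add_eq (h : x ^ (n + k) = x ^ n) {s : ℕ} (hs : n ≤ s)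
    (j : ℕ) : x ^ (s + j * k) = x ^ s := by
  induction j with
  | zero => simp
  | succ j ih =>
    rw [Nat.succ_mul, ← add_assoc, pow_add_eq_pow_of_pow_add_eq h (by omega), ih]

end Monoid

theorem exists_nilpotent_add_potent_of_pow_add_eq {R : Type*} [Ring R] {x : R} {n k : ℕ}
    (hn : 0 < n) (hk : 0 < k) (h : x ^ (n + k) = x ^ n) :
    ∃ a b : R, x = a + b ∧ a ^ n = 0 ∧ b ^ (k + 1) = b ∧ a * b = 0 ∧ b * a = 0 := by
  set N := n * k
  have hN : n ≤ N := Nat.le_mul_of_pos_right n hk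
  have periodic : ∀ s, n ≤ s → x ^ (s + N) = x ^ s := fun s hs =>
    pow_add_mul_eq_pow_of_pow_add_eq h hs n
  have absorb : x ^ (N + 1) * x ^ (N + 1) = x ^ (N + 1 + 1) := by
    rw [← pow_add, show N + 1 + (N + 1) = N + 1 + 1 + N by omega, periodic _ (by omega)]
  refine ⟨x - x ^ (N + 1), x ^ (N + 1), (sub_add_cancel _ _).symm, ?_, ?_, ?_, ?_⟩
  · have hcomm : Commute x (1 - x ^ N) :=
      (Commute.one_right x).sub_right ((Commute.refl x).pow_right N)
    have hkill : x ^ n * (1 - x ^ N) = 0 := by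
      rw [mul_one_sub, ← pow_add, periodic n le_rfl, sub_self]
    obtain ⟨n, rfl⟩ := Nat.exists_eq_add_one_of_ne_zero hn.ne'
    rw [show x - x ^ (N + 1) = x * (1 - x ^ N) by rw [mul_one_sub, ← pow_succ'], hcomm.mul_pow,
      pow_succ' (1 - x ^ N), ← mul_assoc, hkill, zero_mul]
  · rw [← pow_mul, show (N + 1) * (k + 1) = N + 1 + (N + 1) * k by ring,
      pow_add_mul_eq_pow_of_pow_add_eq h (by omega)]
  · rw [sub_mul, ← pow_succ', absorb, sub_self]
  · rw [mul_sub, ← pow_succ, absorb, sub_self]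

theorem add_pow_succ_of_mul_eq_zero {R : Type*} [Semiring R] {a b : R} (hab : a * b = 0)
    (hba : b * a = 0) (j : ℕ) : (a + b) ^ (j + 1) = a ^ (j + 1) + b ^ (j + 1) := by
  induction j with
  | zero => simp
  | succ j ih =>
    have hab' : a ^ (j + 1) * b = 0 := by rw [pow_succ, mul_assoc, hab, mul_zero]
    have hba' : b ^ (j + 1) * a = 0 := by rw [pow_succ, mul_assoc, hba, mul_zero]
    rw [pow_succ _ (j + 1), ih, add_mul, mul_add, mul_add, hab', hba', add_zero, zero_add,
      ← pow_succ, ← pow_succ]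

theorem add_pow_add_eq_add_pow_of_mul_eq_zero {R : Type*} [Semiring R] {a b : R} {n k : ℕ}
    (hn : 0 < n) (ha : a ^ n = 0) (hb : b ^ (k + 1) = b) (hab : a * b = 0) (hba : b * a = 0) :
    (a + b) ^ (n + k) = (a + b) ^ n := by
  obtain ⟨n, rfl⟩ := Nat.exists_eq_add_one_of_ne_zero hn.ne'
  have hb' : b ^ (1 + k) = b ^ 1 := by rwa [add_comm, pow_one]
  rw [show n + 1 + k = n + k + 1 by omega, add_pow_succ_of_mul_eq_zero hab hba,
    add_pow_succ_of_mul_eq_zero hab hba, pow_eq_zero_of_le (show n + 1 ≤ n + k + 1 by omega) ha,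
    ha, show n + k + 1 = n + 1 + k by omega, pow_add_eq_pow_of_pow_add_eq hb' (by omega)]

theorem ringChar_ne_zero_of_natCast_eq {R : Type*} [NonAssocRing R] {a b : ℕ} (hab : a ≠ b)
    (h : (a : R) = b) : ringChar R ≠ 0 := fun hR => by
  have := (CharP.ringChar_zero_iff_CharZero R).mp hR
  exact hab (Nat.cast_injective h)

/-- For a ring `R` and fixed positive integers `m > n`, one has `x ^ m = x ^ n` for
all `x ∈ R` if and only if every `x ∈ R` can be written as `x = a + b` with
`a ^ n = 0`, `b ^ (m - n + 1) = b`, `a * b = b * a = 0`, and the characteristic of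
`R` is finite. -/
theorem pow_eq_pow_iff_decomposition (R : Type*) [Ring R] (m n : ℕ)
    (hn : 0 < n) (hmn : n < m) :
    (∀ x : R, x ^ m = x ^ n) ↔
      ((∀ x : R, ∃ a b : R, x = a + b ∧ a ^ n = 0 ∧ b ^ (m - n + 1) = b ∧
          a * b = 0 ∧ b * a = 0) ∧ ringChar R ≠ 0) := by
  obtain ⟨k, hk, rfl⟩ : ∃ k, 0 < k ∧ m = n + k := ⟨m - n, by omega, by omega⟩
  simp only [Nat.add_sub_cancel_left]
  constructor
  · intro h
    refine ⟨fun x => exists_nilpotent_add_potent_of_pow_add_eq hn hk (h x),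
      ringChar_ne_zero_of_natCast_eq (a := 2 ^ (n + k)) (b := 2 ^ n) ?_ ?_⟩
    · exact (Nat.pow_right_injective le_rfl).ne (by omega)
    · push_cast
      exact h 2
  · rintro ⟨hdec, -⟩ x
    obtain ⟨a, b, rfl, ha, hb, hab, hba⟩ := hdec x
    exact add_pow_add_eq_add_pow_of_mul_eq_zero hn ha hb hab hba
end

section
/- For a ring R, the following are equivalent: (1) every element of the Jacobson radical J(R) is nilpotent, and for every x ∈ R there exists an integer m ≥ 2 with x^m − x ∈ J(R) (i.e., R/J(R) is potent); (2) R is a periodic NI ring, i.e., R is periodic and the set Nil(R) of nilpotent elements of R is a two-sided ideal. -/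
/-!
If `J(R)` is nil and `R/J(R)` is potent, then every `x^m - x` is nilpotent. For `x = 2` this makes
the nonzero integer `2^m - 2` nilpotent in `R`, so `R` has positive characteristic `q`; then each
`x` is integral over `ZMod q`, the subalgebra it generates is finite, and its powers repeat.
Nilpotent elements lie in `J(R)` (from `x^m - x ∈ J(R)`, since `1 - x^(m-1)` is a unit), so
`Nil(R) = J(R)` is a two-sided ideal.

Conversely, if `x^(n+s) = x^n` then `x^(s+1) - x` is nilpotent, and a nil two-sided ideal lies in
`J(R)`; for `x ∈ J(R)`, `1 - x^s` has a left inverse and kills `x^n`.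
-/

/-- A ring `R` is *periodic* if for every `x ∈ R` there exist positive integers
`m > n` with `x ^ m = x ^ n`. -/
def IsPeriodicRing (R : Type*) [Ring R] : Prop :=
  ∀ x : R, ∃ m n : ℕ, 0 < n ∧ n < m ∧ x ^ m = x ^ n

theorem exists_pow_eq_pow_of_finite {M : Type*} [Monoid M] [Finite M] (x : M) :
    ∃ m n : ℕ, 0 < n ∧ n < m ∧ x ^ m = x ^ n := by
  obtain ⟨a, b, hab, h⟩ := Finite.exists_ne_map_eq_of_infinite fun j : ℕ => x ^ (j + 1)
  rcases hab.lt_or_gt with hlt | hlt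
  · exact ⟨b + 1, a + 1, a.succ_pos, by omega, h.symm⟩
  · exact ⟨a + 1, b + 1, b.succ_pos, by omega, h⟩

theorem IsIntegral.exists_pow_eq_pow {K A : Type*} [CommRing K] [Finite K] [Ring A]
    [Algebra K A] {x : A} (hx : IsIntegral K x) :
    ∃ m n : ℕ, 0 < n ∧ n < m ∧ x ^ m = x ^ n := by
  have := Algebra.finite_adjoin_simple_of_isIntegral hx
  have := Module.finite_of_finite K (M := Algebra.adjoin K {x})
  obtain ⟨m, n, hn, hnm, h⟩ :=
    exists_pow_eq_pow_of_finite
      (⟨x, Algebra.self_mem_adjoin_singleton K x⟩ : Algebra.adjoin K {x})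
  exact ⟨m, n, hn, hnm, congrArg Subtype.val h⟩

section Ring

variable {R : Type*} [Ring R]

theorem ringChar_ne_zero_of_isNilpotent_natCast {n : ℕ} (hn : n ≠ 0) (h : IsNilpotent (n : R)) :
    ringChar R ≠ 0 := by
  obtain ⟨k, hk⟩ := h
  have hdvd : ringChar R ∣ n ^ k := ringChar.dvd (by rw [Nat.cast_pow, hk])
  exact ne_zero_of_dvd_ne_zero (pow_ne_zero k hn) hdvd

theorem isPeriodicRing_of_forall_isNilpotent_pow_sub_self
    (h : ∀ x : R, ∃ m : ℕ, 2 ≤ m ∧ IsNilpotent (x ^ m - x)) : IsPeriodicRing R := by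
  have hchar : ringChar R ≠ 0 := by
    obtain ⟨m, hm, hnil⟩ := h 2
    have h2m : 4 ≤ 2 ^ m := by
      calc 4 = 2 ^ 2 := rfl
        _ ≤ 2 ^ m := Nat.pow_le_pow_right two_pos hm
    refine ringChar_ne_zero_of_isNilpotent_natCast (n := 2 ^ m - 2) (by omega) ?_
    rwa [Nat.cast_sub (by omega), Nat.cast_pow, Nat.cast_ofNat]
  have : NeZero (ringChar R) := ⟨hchar⟩
  let := ZMod.algebra R (ringChar R)
  intro x
  obtain ⟨m, hm, k, hk⟩ := h x
  refine IsIntegral.exists_pow_eq_pow (K := ZMod (ringChar R))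
    ⟨(Polynomial.X ^ m - Polynomial.X) ^ k, ?_, ?_⟩
  · refine (Polynomial.monic_X_pow_sub ?_).pow k
    exact Polynomial.degree_X_le.trans_lt (by exact_mod_cast hm)
  · simpa [Polynomial.eval₂_pow] using hk

theorem IsPeriodicRing.exists_pow_add_eq_pow (hR : IsPeriodicRing R) (x : R) :
    ∃ n s : ℕ, 0 < s ∧ x ^ (n + s) = x ^ n := by
  obtain ⟨m, n, -, hnm, h⟩ := hR x
  exact ⟨n, m - n, by omega, by rwa [Nat.add_sub_cancel' hnm.le]⟩

theorem isNilpotent_pow_succ_sub_self_of_pow_add_eq_pow {x : R} {n s : ℕ}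
    (h : x ^ (n + s) = x ^ n) : IsNilpotent (x ^ (s + 1) - x) := by
  have hfac : x ^ (s + 1) - x = x * (x ^ s - 1) := by rw [mul_sub, mul_one, pow_succ']
  have hcomm : Commute x (x ^ s - 1) := ((Commute.refl x).pow_right s).sub_right (.one_right x)
  have hkill : x ^ n * (x ^ s - 1) = 0 := by rw [mul_sub, mul_one, ← pow_add, h, sub_self]
  refine ⟨n + 1, ?_⟩
  calc (x ^ (s + 1) - x) ^ (n + 1) = x * (x ^ n * (x ^ s - 1)) * (x ^ s - 1) ^ n := by
        rw [hfac, hcomm.mul_pow, pow_succ' x, pow_succ' (x ^ s - 1)]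
        simp only [mul_assoc]
    _ = 0 := by rw [hkill, mul_zero, zero_mul]

theorem pow_eq_zero_of_mem_jacobson_of_pow_add_eq_pow {x : R}
    (hx : x ∈ Ideal.jacobson (⊥ : Ideal R)) {n s : ℕ} (hs : 0 < s) (h : x ^ (n + s) = x ^ n) :
    x ^ n = 0 := by
  have hxs : -x ^ s ∈ Ideal.jacobson (⊥ : Ideal R) := by
    rw [← Nat.sub_add_cancel hs, pow_succ]
    exact neg_mem (Ideal.mul_mem_left _ _ hx)
  obtain ⟨z, hz⟩ := Ideal.exists_mul_add_sub_mem_of_mem_jacobson _ hxs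
  rw [Ideal.mem_bot, sub_eq_zero] at hz
  -- `1 - x^s` has only a left inverse, but it commutes with `x^n`, which it annihilates.
  calc x ^ n = z * (-x ^ s + 1) * x ^ n := by rw [hz, one_mul]
    _ = z * (x ^ n - x ^ s * x ^ n) := by noncomm_ring
    _ = 0 := by rw [← pow_add, add_comm s, h, sub_self, mul_zero]

theorem mem_jacobson_bot_of_forall_isNilpotent_mul {x : R} (h : ∀ y, IsNilpotent (y * x)) :
    x ∈ Ideal.jacobson (⊥ : Ideal R) := by
  refine Ideal.mem_jacobson_iff.mpr fun y => ?_
  obtain ⟨u, hu⟩ := (h y).isUnit_add_one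
  refine ⟨↑u⁻¹, Ideal.mem_bot.mpr ?_⟩
  calc ↑u⁻¹ * y * x + ↑u⁻¹ - 1 = ↑u⁻¹ * (y * x + 1) - 1 := by noncomm_ring
    _ = 0 := by rw [← hu, Units.inv_mul, sub_self]

theorem Ideal.mem_of_isNilpotent_of_pow_sub_self_mem {I : Ideal R} {x : R}
    (hx : IsNilpotent x) {m : ℕ} (hm : 2 ≤ m) (h : x ^ m - x ∈ I) : x ∈ I := by
  obtain ⟨u, hu⟩ := (hx.pow_of_pos (n := m - 1) (by omega)).isUnit_one_sub
  have hux : ↑u * x = -(x ^ m - x) := by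
    rw [hu, sub_mul, one_mul, ← pow_succ, Nat.sub_add_cancel (by omega : 1 ≤ m), neg_sub]
  have hx_eq : x = ↑u⁻¹ * -(x ^ m - x) := by
    rw [← hux, ← mul_assoc, Units.inv_mul, one_mul]
  rw [hx_eq]
  exact I.mul_mem_left _ (neg_mem h)

end Ring

/-- For a ring `R`, the Jacobson radical `J(R)` is nil and `R/J(R)` is potent
(`x ^ m - x ∈ J(R)` for some `m ≥ 2`, for every `x`) if and only if `R` is a
periodic NI ring (the set of nilpotent elements forms a two-sided ideal). -/
theorem jacobson_nil_and_quotient_potent_iff_periodic_NI (R : Type*) [Ring R] :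
    ((∀ x ∈ Ideal.jacobson (⊥ : Ideal R), IsNilpotent x) ∧
      (∀ x : R, ∃ m : ℕ, 2 ≤ m ∧ x ^ m - x ∈ Ideal.jacobson (⊥ : Ideal R))) ↔
    (IsPeriodicRing R ∧ ∃ I : TwoSidedIdeal R, ∀ x : R, x ∈ I ↔ IsNilpotent x) := by
  constructor
  · rintro ⟨hnil, hpot⟩
    have hnil_mem (x : R) (hx : IsNilpotent x) : x ∈ Ideal.jacobson (⊥ : Ideal R) := by
      obtain ⟨m, hm, hmem⟩ := hpot x
      exact Ideal.mem_of_isNilpotent_of_pow_sub_self_mem hx hm hmem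
    refine ⟨isPeriodicRing_of_forall_isNilpotent_pow_sub_self fun x => ?_,
      (Ideal.jacobson ⊥).toTwoSided,
      fun x => Ideal.mem_toTwoSided.trans ⟨hnil x, hnil_mem x⟩⟩
    obtain ⟨m, hm, hmem⟩ := hpot x
    exact ⟨m, hm, hnil _ hmem⟩
  · rintro ⟨hper, I, hI⟩
    refine ⟨fun x hx => ?_, fun x => ?_⟩
    · obtain ⟨n, s, hs, h⟩ := hper.exists_pow_add_eq_pow x
      exact ⟨n, pow_eq_zero_of_mem_jacobson_of_pow_add_eq_pow hx hs h⟩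
    · obtain ⟨n, s, hs, h⟩ := hper.exists_pow_add_eq_pow x
      have hmem : x ^ (s + 1) - x ∈ I :=
        (hI _).mpr (isNilpotent_pow_succ_sub_self_of_pow_add_eq_pow h)
      exact ⟨s + 1, by omega, mem_jacobson_bot_of_forall_isNilpotent_mul fun y =>
        (hI _).mp (I.mul_mem_left y _ hmem)⟩
end

section
/- The following two statements are equivalent: (1) for every ring R which is Abelian (all idempotents central) and periodic, the matrix ring M₂(R) (Matrix (Fin 2) (Fin 2) R) is periodic; (2) for every ring R which is local (nontrivial, and for all a, b ∈ R with a + b = 1, a or b is a unit) and periodic, the matrix ring M₂(R) is periodic. -/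
def IsPeriodicElem {M : Type*} [Monoid M] (x : M) : Prop :=
  ∃ m n : ℕ, 0 < n ∧ n < m ∧ x ^ m = x ^ n

section Monoid

variable {M : Type*} [Monoid M]

theorem IsPeriodicElem.map {N F : Type*} [Monoid N] [FunLike F M N] [MonoidHomClass F M N]
    (f : F) {x : M} (hx : IsPeriodicElem x) : IsPeriodicElem (f x) := by
  obtain ⟨m, n, hn, hnm, h⟩ := hx
  exact ⟨m, n, hn, hnm, by rw [← map_pow, ← map_pow, h]⟩

theorem mul_pow_add_mul_eq {a y : M} {n d : ℕ} (h : a * y ^ (n + d) = a * y ^ n) {N : ℕ}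
    (hN : n ≤ N) (k : ℕ) : a * y ^ (N + k * d) = a * y ^ N := by
  obtain ⟨j, rfl⟩ := Nat.exists_eq_add_of_le hN
  induction k with
  | zero => simp
  | succ k ih =>
    calc a * y ^ (n + j + (k + 1) * d)
        = a * y ^ (n + d) * y ^ (j + k * d) := by
          rw [mul_assoc, ← pow_add]; congr 2; ring
      _ = a * y ^ (n + j + k * d) := by
          rw [h, mul_assoc, ← pow_add, add_assoc]
      _ = a * y ^ (n + j) := ih

theorem IsPeriodicElem.exists_isIdempotentElem_pow {x : M} (hx : IsPeriodicElem x) :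
    ∃ k ≠ 0, IsIdempotentElem (x ^ k) := by
  obtain ⟨m, n, hn, hnm, h⟩ := hx
  obtain ⟨d, rfl⟩ : ∃ d, m = n + d := ⟨m - n, by omega⟩
  have hd : 0 < d := by omega
  have h₁ : 1 * x ^ (n + d) = 1 * x ^ n := by rw [one_mul, one_mul, h]
  have := mul_pow_add_mul_eq h₁ (Nat.le_mul_of_pos_right n hd) n
  rw [one_mul, one_mul, pow_add] at this
  exact ⟨n * d, by positivity, this⟩

end Monoid

theorem IsPeriodicElem.of_add_eq_one {R : Type*} [Ring R] {f g y : R} (hfg : f + g = 1)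
    (hf : ∃ m n : ℕ, 0 < n ∧ n < m ∧ f * y ^ m = f * y ^ n)
    (hg : ∃ m n : ℕ, 0 < n ∧ n < m ∧ g * y ^ m = g * y ^ n) : IsPeriodicElem y := by
  obtain ⟨m₁, n₁, hn₁, hnm₁, h₁⟩ := hf
  obtain ⟨m₂, n₂, hn₂, hnm₂, h₂⟩ := hg
  obtain ⟨d₁, rfl⟩ : ∃ d, m₁ = n₁ + d := ⟨m₁ - n₁, by omega⟩
  obtain ⟨d₂, rfl⟩ : ∃ d, m₂ = n₂ + d := ⟨m₂ - n₂, by omega⟩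
  set N := max n₁ n₂
  have hd : 0 < d₂ * d₁ := Nat.mul_pos (by omega) (by omega)
  refine ⟨N + d₂ * d₁, N, by omega, by omega, ?_⟩
  calc y ^ (N + d₂ * d₁)
      = f * y ^ (N + d₂ * d₁) + g * y ^ (N + d₁ * d₂) := by
        rw [Nat.mul_comm d₁, ← add_mul, hfg, one_mul]
    _ = f * y ^ N + g * y ^ N := by
        rw [mul_pow_add_mul_eq h₁ (le_max_left _ _), mul_pow_add_mul_eq h₂ (le_max_right _ _)]
    _ = y ^ N := by rw [← add_mul, hfg, one_mul]

theorem IsPeriodicRing.quotient {R : Type*} [Ring R] (hR : IsPeriodicRing R) (c : RingCon R) :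
    IsPeriodicRing c.Quotient := fun q => by
  obtain ⟨r, rfl⟩ := c.mk'_surjective q
  exact IsPeriodicElem.map c.mk' (hR r)

@[simps]
def IsIdempotentElem.mulLeftNonUnitalRingHom {A : Type*} [Ring A] {u : A}
    (hu : IsIdempotentElem u) (hc : ∀ x, Commute u x) : A →ₙ+* A where
  toFun x := u * x
  map_mul' x y := by
    change u * (x * y) = u * x * (u * y)
    simp only [← mul_assoc]
    rw [mul_assoc u x u, ← (hc x).eq, ← mul_assoc u u x, hu.eq]
  map_zero' := mul_zero u
  map_add' := mul_add u

namespace RingCon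

variable {A : Type*}

theorem sSup_rel_iff_of_directedOn [Add A] [Mul A] {S : Set (RingCon A)}
    (hS : DirectedOn (· ≤ ·) S) (hne : S.Nonempty) {a b : A} :
    sSup S a b ↔ ∃ c ∈ S, c a b := by
  have common {c₁ c₂} (h₁ : c₁ ∈ S) (h₂ : c₂ ∈ S) {a b a' b' : A} (ha : c₁ a b) (ha' : c₂ a' b') :
      ∃ c ∈ S, c a b ∧ c a' b' :=
    let ⟨c, hc, hc₁, hc₂⟩ := hS c₁ h₁ c₂ h₂
    ⟨c, hc, hc₁ ha, hc₂ ha'⟩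
  let U : RingCon A :=
    { r a b := ∃ c ∈ S, c a b
      iseqv :=
        { refl a := let ⟨c, hc⟩ := hne; ⟨c, hc, c.refl a⟩
          symm := fun ⟨c, hc, h⟩ => ⟨c, hc, c.symm h⟩
          trans := fun ⟨_, h₁, hab⟩ ⟨_, h₂, hbc⟩ =>
            let ⟨c, hc, hab, hbc⟩ := common h₁ h₂ hab hbc
            ⟨c, hc, c.trans hab hbc⟩ }
      add' := fun ⟨_, h₁, hab⟩ ⟨_, h₂, hcd⟩ =>
        let ⟨c, hc, hab, hcd⟩ := common h₁ h₂ hab hcd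
        ⟨c, hc, c.add hab hcd⟩
      mul' := fun ⟨_, h₁, hab⟩ ⟨_, h₂, hcd⟩ =>
        let ⟨c, hc, hab, hcd⟩ := common h₁ h₂ hab hcd
        ⟨c, hc, c.mul hab hcd⟩ }
  exact ⟨fun h => sSup_le (a := U) (fun c hc _ _ h => ⟨c, hc, h⟩) h,
    fun ⟨c, hc, h⟩ => le_sSup hc h⟩

section Ring

variable [Ring A]

theorem isPeriodicElem_mk'_iff (c : RingCon A) (a : A) :
    IsPeriodicElem (c.mk' a) ↔ ∃ m n : ℕ, 0 < n ∧ n < m ∧ c (a ^ m) (a ^ n) := by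
  refine exists₂_congr fun m n => and_congr_right' <| and_congr_right' ?_
  rw [← map_pow, ← map_pow]
  exact c.eq

theorem exists_maximal_not_isPeriodicElem_mk' {a : A} (ha : ¬IsPeriodicElem a) :
    ∃ c : RingCon A, Maximal (fun c : RingCon A => ¬IsPeriodicElem (c.mk' a)) c := by
  have hbot : ¬IsPeriodicElem ((⊥ : RingCon A).mk' a) := by
    rwa [isPeriodicElem_mk'_iff, coe_bot]
  have hchain (S : Set (RingCon A)) (hS : S ⊆ {c | ¬IsPeriodicElem (c.mk' a)})
      (hchain : IsChain (· ≤ ·) S) (c : RingCon A) (hc : c ∈ S) :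
      ¬IsPeriodicElem ((sSup S).mk' a) := fun hper => by
    obtain ⟨m, n, hn, hnm, h⟩ := (isPeriodicElem_mk'_iff _ a).1 hper
    obtain ⟨d, hd, h⟩ := (sSup_rel_iff_of_directedOn hchain.directedOn ⟨c, hc⟩).1 h
    exact hS hd ((isPeriodicElem_mk'_iff d a).2 ⟨m, n, hn, hnm, h⟩)
  obtain ⟨c, -, hc⟩ := zorn_le_nonempty₀ {c : RingCon A | ¬IsPeriodicElem (c.mk' a)}
    (fun S hS hS' c hc => ⟨sSup S, hchain S hS hS' c hc, fun _ => le_sSup⟩) ⊥ hbot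
  exact ⟨c, hc⟩

theorem rel_zero_or_rel_one_sub_of_maximal {c : RingCon A} {a u : A}
    (hmax : Maximal (fun c : RingCon A => ¬IsPeriodicElem (c.mk' a)) c)
    (hu : IsIdempotentElem u) (hc : ∀ x, Commute u x) : c u 0 ∨ c (1 - u) 0 := by
  -- `x ~ y ↔ c (v * x) (v * y)` is a congruence above `c` relating `1 - v` to `0`.
  have periodic_of_not_rel {v : A} (hv : IsIdempotentElem v) (hvc : ∀ x, Commute v x)
      (hrel : ¬c (1 - v) 0) :
      ∃ m n : ℕ, 0 < n ∧ n < m ∧ c.mk' v * c.mk' a ^ m = c.mk' v * c.mk' a ^ n := by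
    have hper : IsPeriodicElem ((c.comap (hv.mulLeftNonUnitalRingHom hvc)).mk' a) := by
      by_contra hper
      refine hrel (hmax.2 hper (fun x y h => c.mul (c.refl v) h) ?_)
      change c (v * (1 - v)) (v * 0)
      rw [hv.mul_one_sub_self, mul_zero]
      exact c.refl 0
    obtain ⟨m, n, hn, hnm, h⟩ := (isPeriodicElem_mk'_iff _ a).1 hper
    rw [comap_rel, IsIdempotentElem.mulLeftNonUnitalRingHom_apply,
      IsIdempotentElem.mulLeftNonUnitalRingHom_apply] at h
    refine ⟨m, n, hn, hnm, ?_⟩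
    rw [← map_pow, ← map_pow, ← map_mul, ← map_mul]
    exact c.eq.2 h
  by_contra! h
  refine hmax.1 (IsPeriodicElem.of_add_eq_one (by rw [← map_add, add_sub_cancel, map_one])
    (periodic_of_not_rel hu hc h.2)
    (periodic_of_not_rel hu.one_sub (fun x => (Commute.one_left x).sub_left (hc x)) ?_))
  rw [sub_sub_cancel]
  exact h.1

end Ring

end RingCon

theorem IsLocalRing.of_forall_exists_pow_eq_zero_or_one {Q : Type*} [Ring Q] [Nontrivial Q]
    (h : ∀ q : Q, ∃ k ≠ 0, q ^ k = 0 ∨ q ^ k = 1) : IsLocalRing Q :=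
  of_isUnit_or_isUnit_one_sub_self fun q => by
    obtain ⟨k, hk, h0 | h1⟩ := h q
    · exact Or.inr (IsNilpotent.isUnit_one_sub ⟨k, h0⟩)
    · exact Or.inl (IsUnit.of_pow_eq_one h1 hk)

theorem IsLocalRing.eq_zero_or_eq_one_of_isIdempotentElem {R : Type*} [Ring R] [IsLocalRing R]
    {e : R} (he : IsIdempotentElem e) : e = 0 ∨ e = 1 := by
  rcases isUnit_or_isUnit_of_add_one (add_sub_cancel e 1) with hu | hu
  · exact Or.inr ((IsIdempotentElem.iff_eq_one_of_isUnit hu).1 he)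
  · exact Or.inl (sub_eq_self.1 ((IsIdempotentElem.iff_eq_one_of_isUnit hu).1 he.one_sub))

theorem exists_isLocalRing_quotient_not_isPeriodicElem_map {R n : Type*} [Ring R] [Fintype n]
    [DecidableEq n] (habel : ∀ e : R, IsIdempotentElem e → ∀ x, Commute e x)
    (hR : IsPeriodicRing R) {x : Matrix n n R} (hx : ¬IsPeriodicElem x) :
    ∃ c : RingCon R, IsLocalRing c.Quotient ∧ ¬IsPeriodicElem (x.map c.mk') := by
  obtain ⟨D, hD⟩ := RingCon.exists_maximal_not_isPeriodicElem_mk' hx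
  obtain ⟨c, hc⟩ : ∃ c, RingCon.ofMatrix D = c := ⟨_, rfl⟩
  have hcD : c.matrix n = D := hc ▸ RingCon.matrix_ofMatrix D
  have rel_of_scalar (r : R) (h : D (Matrix.scalar n r) 0) : c r 0 := hc ▸ fun i j => by
    simpa [Matrix.scalar_apply, ← Matrix.smul_eq_diagonal_mul, Matrix.smul_single]
      using D.mul h (D.refl (Matrix.single i j 1))
  have idempotent_rel (e : R) (he : IsIdempotentElem e) : c e 0 ∨ c (1 - e) 0 := by
    refine (RingCon.rel_zero_or_rel_one_sub_of_maximal hD (he.map (Matrix.scalar n))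
      (Matrix.scalar_commute e (habel e he))).imp (rel_of_scalar e) fun h => rel_of_scalar _ ?_
    rwa [map_sub, map_one]
  have : Nontrivial c.Quotient := RingCon.nontrivial_quotient.2 fun htop => hD.1 <| by
    rw [RingCon.isPeriodicElem_mk'_iff, ← hcD, htop, RingCon.matrix_top]
    exact ⟨2, 1, one_pos, one_lt_two, trivial⟩
  refine ⟨c, IsLocalRing.of_forall_exists_pow_eq_zero_or_one fun q => ?_, fun hper => hD.1 ?_⟩
  · obtain ⟨r, rfl⟩ := c.mk'_surjective q
    obtain ⟨k, hk, he⟩ := IsPeriodicElem.exists_isIdempotentElem_pow (hR r)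
    refine ⟨k, hk, (idempotent_rel _ he).imp (fun h => ?_) fun h => ?_⟩
    · rw [← map_pow, ← map_zero c.mk']
      exact c.eq.2 h
    · rw [← map_pow, eq_comm, ← sub_eq_zero, ← map_one c.mk', ← map_sub, ← map_zero c.mk']
      exact c.eq.2 h
  · obtain ⟨m, k, hk, hkm, h⟩ := hper
    rw [← Matrix.map_pow, ← Matrix.map_pow] at h
    refine (RingCon.isPeriodicElem_mk'_iff D x).2 ⟨m, k, hk, hkm, ?_⟩
    rw [← hcD]
    exact fun i j => c.eq.1 (congrFun (congrFun h i) j)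

/-- The statement "for every Abelian (all idempotents central) periodic ring `R`,
`M₂(R)` is periodic" is equivalent to the statement "for every local periodic ring
`R`, `M₂(R)` is periodic". -/
theorem abelian_matrix_periodic_iff_local_matrix_periodic :
    (∀ (R : Type) [Ring R], (∀ e : R, e * e = e → ∀ x : R, e * x = x * e) →
        IsPeriodicRing R → IsPeriodicRing (Matrix (Fin 2) (Fin 2) R)) ↔
    (∀ (R : Type) [Ring R], IsLocalRing R →
        IsPeriodicRing R → IsPeriodicRing (Matrix (Fin 2) (Fin 2) R)) := by
  refine ⟨fun h R _ hloc hR => h R (fun e he x => ?_) hR, fun h R _ habel hR x => ?_⟩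
  · rcases IsLocalRing.eq_zero_or_eq_one_of_isIdempotentElem he with rfl | rfl <;> simp
  · by_contra hx
    obtain ⟨c, hc, hcx⟩ := exists_isLocalRing_quotient_not_isPeriodicElem_map habel hR hx
    exact hcx (h c.Quotient hc (hR.quotient c) _)
end

section
/- For a ring R, the following are equivalent: (1) for every positive integer n, the matrix ring Mₙ(R) (Matrix (Fin n) (Fin n) R) is periodic; (2) for every finitely generated R-module M, the endomorphism ring End_R(M) (Module.End R M) is periodic, i.e., for every φ : M →ₗ[R] M there exist positive integers k > l with φ^k = φ^l. -/
universe u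

/-
Every finitely generated module `M` is a quotient `π : Rⁿ ↠ M` of a free module, and
`End_R(Rⁿ) ≅ Mₙ(R)ᵐᵒᵖ` (matrices acting on row vectors from the right), which is periodic exactly
when `Mₙ(R)` is. By projectivity of `Rⁿ`, every `φ ∈ End_R(M)` lifts to `ψ ∈ End_R(Rⁿ)` with
`π ∘ ψ = φ ∘ π`; then `π ∘ ψᵏ = φᵏ ∘ π`, so `ψᵐ = ψⁿ` forces `φᵐ = φⁿ` because `π` is onto.
-/

theorem IsPeriodicRing.of_subsingleton {R : Type*} [Ring R] [Subsingleton R] :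
    IsPeriodicRing R :=
  fun _ => ⟨2, 1, one_pos, one_lt_two, Subsingleton.elim _ _⟩

theorem Matrix.toLinearMapRight'_pow {R m : Type*} [Ring R] [Fintype m] [DecidableEq m]
    (A : Matrix m m R) (k : ℕ) :
    (A ^ k).toLinearMapRight' = A.toLinearMapRight' ^ k := by
  induction k with
  | zero => rw [pow_zero, pow_zero, Matrix.toLinearMapRight'_one, Module.End.one_eq_id]
  | succ k ih => rw [pow_succ, pow_succ', Matrix.toLinearMapRight'_mul, ih, Module.End.mul_eq_comp]

theorem isPeriodicRing_matrix_iff_moduleEnd {R m : Type*} [Ring R] [Fintype m] [DecidableEq m] :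
    IsPeriodicRing (Matrix m m R) ↔ IsPeriodicRing (Module.End R (m → R)) :=
  Matrix.toLinearMapRight'.toEquiv.forall_congr fun A => by
    simp only [LinearEquiv.coe_toEquiv, ← Matrix.toLinearMapRight'_pow,
      Matrix.toLinearMapRight'.injective.eq_iff]

theorem IsPeriodicRing.moduleEnd_of_surjective {R P M : Type*} [Ring R] [AddCommGroup P]
    [Module R P] [Module.Projective R P] [AddCommGroup M] [Module R M] (π : P →ₗ[R] M)
    (hπ : Function.Surjective π) (h : IsPeriodicRing (Module.End R P)) :
    IsPeriodicRing (Module.End R M) := by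
  intro φ
  obtain ⟨ψ, hψ⟩ := Module.projective_lifting_property π (φ ∘ₗ π) hπ
  obtain ⟨m, n, hn, hnm, hψmn⟩ := h ψ
  have hpow (k : ℕ) : (φ ^ k) ∘ₗ π = π ∘ₗ (ψ ^ k) :=
    Module.End.commute_pow_left_of_commute hψ.symm k
  exact ⟨m, n, hn, hnm, (LinearMap.cancel_right hπ).1 (by rw [hpow, hpow, hψmn])⟩

/-- For a ring `R`, all matrix rings `Mₙ(R)` (`n ≥ 1`) are periodic if and only if
the endomorphism ring of every finitely generated right `R`-module is periodic. -/
theorem matrix_periodic_iff_end_fg_module_periodic (R : Type u) [Ring R] :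
    (∀ n : ℕ, 0 < n → IsPeriodicRing (Matrix (Fin n) (Fin n) R)) ↔
    (∀ (M : Type u) [AddCommGroup M] [Module R M], Module.Finite R M →
      ∀ φ : Module.End R M, ∃ k l : ℕ, 0 < l ∧ l < k ∧ φ ^ k = φ ^ l) := by
  constructor
  · intro h M _ _ _
    obtain ⟨n, π, hπ⟩ := Module.Finite.exists_fin' R M
    refine IsPeriodicRing.moduleEnd_of_surjective π hπ ?_
    rcases n.eq_zero_or_pos with rfl | hn
    · exact .of_subsingleton
    · exact isPeriodicRing_matrix_iff_moduleEnd.1 (h n hn)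
  · intro h n _
    exact isPeriodicRing_matrix_iff_moduleEnd.2 (h _ inferInstance)
end

section
/- For an additive abelian group G, the endomorphism ring E(G) (AddMonoid.End G, with composition as multiplication) is a periodic ring if and only if G is finite. -/
open Finsupp

theorem IsPeriodicRing.of_finite (R : Type*) [Ring R] [Finite R] : IsPeriodicRing R := by
  intro x
  obtain ⟨a, b, hab, h⟩ := Finite.exists_ne_map_eq_of_infinite fun t : ℕ => x ^ (t + 1)
  rcases hab.lt_or_gt with hlt | hlt
  · exact ⟨b + 1, a + 1, by omega, by omega, h.symm⟩
  · exact ⟨a + 1, b + 1, by omega, by omega, h⟩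

theorem IsPeriodicRing.exists_natCast_eq_zero {R : Type*} [Ring R] (h : IsPeriodicRing R) :
    ∃ c : ℕ, c ≠ 0 ∧ (c : R) = 0 := by
  obtain ⟨m, n, -, hnm, hmn⟩ := h 2
  have hlt : 2 ^ n < 2 ^ m := Nat.pow_lt_pow_right one_lt_two hnm
  refine ⟨2 ^ m - 2 ^ n, by omega, ?_⟩
  push_cast [hlt.le]
  rw [hmn, sub_self]

theorem IsPeriodicRing.addMonoidEnd_of_retract {X G : Type*} [AddCommGroup X] [AddCommGroup G]
    (α : X →+ G) (β : G →+ X) (hβα : β.comp α = AddMonoidHom.id X)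
    (h : IsPeriodicRing (AddMonoid.End G)) : IsPeriodicRing (AddMonoid.End X) := by
  intro T
  let f : AddMonoid.End G := α.comp (T.comp β)
  have hβα' : ∀ x, β (α x) = x := DFunLike.congr_fun hβα
  have hβf : ∀ n x, β ((f ^ n) x) = (T ^ n) (β x) := by
    intro n
    induction n with
    | zero => intro x; rfl
    | succ n ih =>
      intro x
      rw [pow_succ, pow_succ]
      change β ((f ^ n) (α (T (β x)))) = (T ^ n) (T (β x))
      rw [ih, hβα']
  obtain ⟨m, n, hn, hnm, hmn⟩ := h f
  refine ⟨m, n, hn, hnm, DFunLike.ext _ _ fun x => ?_⟩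
  have hm := hβf m (α x)
  have hn := hβf n (α x)
  rw [hβα'] at hm hn
  rw [← hm, ← hn, hmn]

theorem not_isPeriodicRing_addMonoidEnd_finsupp (A : Type*) [AddCommGroup A] [Nontrivial A] :
    ¬ IsPeriodicRing (AddMonoid.End (ℕ →₀ A)) := by
  let shift : AddMonoid.End (ℕ →₀ A) := mapDomain.addMonoidHom Nat.succ
  have hshift : ∀ n (a : A), (shift ^ n) (single 0 a) = single n a := by
    intro n a
    induction n with
    | zero => rfl
    | succ n ih =>
      rw [pow_succ']
      change mapDomain Nat.succ ((shift ^ n) (single 0 a)) = _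
      rw [ih, mapDomain_single]
  obtain ⟨a, ha⟩ := exists_ne (0 : A)
  intro h
  obtain ⟨m, n, -, hnm, hmn⟩ := h shift
  have hsingle := hshift m a
  rw [hmn, hshift n a, single_left_inj ha] at hsingle
  omega

/-- The elementwise form of P-injectivity: every linear map from a principal ideal `R ∙ r`
to `M` extends to `R`. -/
def Module.PrincipallyInjective (R M : Type*) [CommRing R] [AddCommGroup M] [Module R M] :
    Prop :=
  ∀ (r : R) (m : M), (∀ t : R, t * r = 0 → t • m = 0) → ∃ y : M, r • y = m

namespace Module.PrincipallyInjective

variable {R M : Type*} [CommRing R] [AddCommGroup M] [Module R M]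

theorem baer [IsPrincipalIdealRing R] (h : PrincipallyInjective R M) : Module.Baer R M := by
  intro I g
  obtain ⟨r, rfl⟩ := (IsPrincipalIdealRing.principal I).principal
  have hr : r ∈ Submodule.span R {r} := Submodule.mem_span_singleton_self r
  obtain ⟨y, hy⟩ := h r (g ⟨r, hr⟩) fun t ht => by
    rw [← map_smul]
    convert g.map_zero
    exact Subtype.ext ht
  refine ⟨LinearMap.toSpanSingleton R M y, fun x hx => ?_⟩
  obtain ⟨t, rfl⟩ := Submodule.mem_span_singleton.mp hx
  rw [LinearMap.toSpanSingleton_apply, smul_assoc, hy, ← map_smul]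
  rfl

theorem finsupp (ι : Type*) (h : PrincipallyInjective R M) : PrincipallyInjective R (ι →₀ M) := by
  classical
  intro r m hann
  have hcoord : ∀ i, ∃ y : M, r • y = m i := fun i =>
    h r (m i) fun t ht => by rw [← Finsupp.smul_apply, hann t ht, Finsupp.zero_apply]
  choose y hy using hcoord
  refine ⟨onFinset m.support (fun i => if m i = 0 then 0 else y i) fun i hi => ?_, ?_⟩
  · by_contra h'
    exact hi (if_pos (Finsupp.notMem_support_iff.mp h'))
  · ext i
    by_cases hi : m i = 0 <;> simp [hi, hy]

end Module.PrincipallyInjective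

instance ZMod.isPrincipalIdealRing (n : ℕ) : IsPrincipalIdealRing (ZMod n) :=
  .of_surjective (Int.castRingHom _) ZMod.intCast_surjective

theorem ZMod.principallyInjective {Q : ℕ} (hQ : Q ≠ 0) :
    Module.PrincipallyInjective (ZMod Q) (ZMod Q) := by
  have : NeZero Q := ⟨hQ⟩
  intro r s hann
  -- With `d = gcd r Q`: `Q / d` kills `r`, hence `s`, so `d ∣ s`; and `d` is a multiple of `r`.
  set d := Nat.gcd r.val Q
  have hQd : 0 < Q / d := Nat.div_pos (Nat.gcd_le_right _ (Nat.pos_of_ne_zero hQ))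
    (Nat.gcd_pos_of_pos_right _ (Nat.pos_of_ne_zero hQ))
  have hkill : ((Q / d : ℕ) : ZMod Q) * r = 0 := by
    rw [← ZMod.natCast_zmod_val r, ← Nat.cast_mul, ZMod.natCast_eq_zero_iff]
    obtain ⟨e, he⟩ := Nat.gcd_dvd_left r.val Q
    refine ⟨e, ?_⟩
    conv_lhs => rw [he]
    rw [← mul_assoc, Nat.div_mul_cancel (Nat.gcd_dvd_right _ _)]
  have hds : d ∣ s.val := by
    have := hann _ hkill
    rw [smul_eq_mul, ← ZMod.natCast_zmod_val s, ← Nat.cast_mul, ZMod.natCast_eq_zero_iff] at this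
    conv_lhs at this => rw [← Nat.div_mul_cancel (Nat.gcd_dvd_right r.val Q)]
    exact Nat.dvd_of_mul_dvd_mul_left hQd (by simpa [mul_comm] using this)
  have hbezout : (d : ZMod Q) = r * (r.val.gcdA Q) := by
    simpa using congrArg (Int.cast : ℤ → ZMod Q) (Nat.gcd_eq_gcd_ab r.val Q)
  refine ⟨(r.val.gcdA Q : ZMod Q) * (s.val / d : ℕ), ?_⟩
  rw [smul_eq_mul, ← mul_assoc, ← hbezout, ← Nat.cast_mul, Nat.mul_div_cancel' hds,
    ZMod.natCast_zmod_val]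

theorem exists_leftInverse_finsupp_zmod {Q : ℕ} (hQ : Q ≠ 0) {M : Type*} [AddCommGroup M]
    [Module (ZMod Q) M] (f : (ℕ →₀ ZMod Q) →+ M) (hf : Function.Injective f) :
    ∃ β : M →+ (ℕ →₀ ZMod Q), β.comp f = AddMonoidHom.id _ := by
  obtain ⟨β, hβ⟩ := ((ZMod.principallyInjective hQ).finsupp ℕ).baer.extension_property
    (f.toZModLinearMap Q) hf LinearMap.id
  exact ⟨β.toAddMonoidHom, AddMonoidHom.ext fun x => LinearMap.congr_fun hβ x⟩

theorem exists_linearIndependent_nat (K V : Type*) [Field K] [Finite K] [AddCommGroup V]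
    [Module K V] [Infinite V] : ∃ w : ℕ → V, LinearIndependent K w := by
  let b := Module.Basis.ofVectorSpace K V
  have : Infinite (Module.Basis.ofVectorSpaceIndex K V) := by
    rw [← not_finite_iff_infinite]
    intro
    have := Module.Finite.of_basis b
    have := Module.finite_of_finite K (M := V)
    exact not_finite V
  exact ⟨b ∘ Infinite.natEmbedding _, b.linearIndependent.comp _ (Infinite.natEmbedding _).injective⟩

theorem AddSubgroup.infinite_quotient_of_finite {A : Type*} [AddGroup A] [Infinite A]
    (H : AddSubgroup A) [Finite H] : Infinite (A ⧸ H) := by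
  rw [← not_finite_iff_infinite, ← AddSubgroup.finiteIndex_iff_finite_quotient]
  intro
  have := (AddSubgroup.finite_iff_finite_and_finiteIndex H).mpr ⟨‹_›, ‹_›⟩
  exact not_finite A

section BoundedGroup

variable {G : Type*} [AddCommGroup G]

variable (G) in
def socleAtHeight (p k : ℕ) : AddSubgroup G :=
  (nsmulAddMonoidHom (p ^ k)).range ⊓ (nsmulAddMonoidHom p).ker

def IndependentModMultiples {ι : Type*} (n : ℕ) (d : ℤ) (v : ι → G) : Prop :=
  ∀ (s : Finset ι) (a : ι → ℤ), ∑ i ∈ s, a i • v i ∈ (nsmulAddMonoidHom n).range →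
    ∀ i ∈ s, d ∣ a i

theorem exists_prime_infinite_ker_nsmul [Infinite G] {c : ℕ} (hc : c ≠ 0)
    (hcG : ∀ x : G, c • x = 0) : ∃ p, p.Prime ∧ Infinite (nsmulAddMonoidHom p : G →+ G).ker := by
  induction c using Nat.strong_induction_on generalizing G with
  | _ c ih =>
  have hc1 : c ≠ 1 := by
    rintro rfl
    have : Subsingleton G := ⟨fun x y => by rw [← one_nsmul x, ← one_nsmul y, hcG, hcG]⟩
    exact not_finite G
  have hp := Nat.minFac_prime hc1
  by_cases hker : Infinite (nsmulAddMonoidHom c.minFac : G →+ G).ker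
  · exact ⟨_, hp, hker⟩
  rw [not_infinite_iff_finite] at hker
  set H := (nsmulAddMonoidHom c.minFac : G →+ G).range
  have : Infinite H := by
    rw [← not_finite_iff_infinite]
    intro hH
    have := (AddMonoidHom.finite_iff_finite_ker_range _).mpr ⟨hker, hH⟩
    exact not_finite G
  have hdvd := Nat.minFac_dvd c
  obtain ⟨q, hq, hinf⟩ := ih (c / c.minFac) (Nat.div_lt_self (Nat.pos_of_ne_zero hc) hp.one_lt)
    (Nat.div_ne_zero_iff_of_dvd hdvd |>.mpr ⟨hc, hp.ne_zero⟩) (G := H) (by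
      rintro ⟨_, y, rfl⟩
      ext
      simp [smul_smul, Nat.div_mul_cancel hdvd, hcG])
  refine ⟨q, hq, Infinite.of_injective
    (fun y : (nsmulAddMonoidHom q : H →+ H).ker => ⟨(y.1 : G), ?_⟩) fun y z h => ?_⟩
  · exact congrArg Subtype.val y.2
  · exact Subtype.ext (Subtype.ext (congrArg Subtype.val h :))

theorem socleAtHeight_eq_bot {p c : ℕ} (hp : p.Prime) (hc : c ≠ 0) (hcG : ∀ x : G, c • x = 0) :
    socleAtHeight G p c = ⊥ := by
  rw [eq_bot_iff]
  rintro _ ⟨⟨y, rfl⟩, hx⟩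
  replace hx : p ^ (c + 1) • y = 0 := by rw [pow_succ, mul_nsmul]; exact hx
  rw [AddSubgroup.mem_bot, nsmulAddMonoidHom_apply, ← addOrderOf_dvd_iff_nsmul_eq_zero]
  obtain ⟨j, hj, hjy⟩ := (Nat.dvd_prime_pow hp).mp (addOrderOf_dvd_of_nsmul_eq_zero hx)
  rw [hjy]
  refine pow_dvd_pow p (Nat.le_of_lt_succ (lt_of_le_of_ne hj ?_))
  rintro rfl
  have hle : p ^ (c + 1) ≤ c :=
    Nat.le_of_dvd (Nat.pos_of_ne_zero hc) (hjy ▸ addOrderOf_dvd_of_nsmul_eq_zero (hcG y))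
  have hlt : c < p ^ c := Nat.lt_pow_self hp.one_lt
  have : p ^ c ≤ p ^ (c + 1) := Nat.pow_le_pow_right hp.pos (by omega)
  omega

theorem exists_socleAtHeight_infinite_finite [Infinite G] {c : ℕ} (hc : c ≠ 0)
    (hcG : ∀ x : G, c • x = 0) :
    ∃ p k, p.Prime ∧ Infinite (socleAtHeight G p k) ∧ Finite (socleAtHeight G p (k + 1)) := by
  classical
  obtain ⟨p, hp, hinf⟩ := exists_prime_infinite_ker_nsmul hc hcG
  have hex : ∃ K, Finite (socleAtHeight G p K) :=
    ⟨c, by rw [socleAtHeight_eq_bot hp hc hcG]; infer_instance⟩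
  have h0 : ¬ Finite (socleAtHeight G p 0) := by
    intro
    have hle : (nsmulAddMonoidHom p : G →+ G).ker ≤ socleAtHeight G p 0 :=
      fun x hx => ⟨⟨x, one_nsmul x⟩, hx⟩
    have := Finite.of_injective _ (AddSubgroup.inclusion_injective hle)
    exact not_finite (nsmulAddMonoidHom p : G →+ G).ker
  have hK : Nat.find hex ≠ 0 := fun h => h0 (h ▸ Nat.find_spec hex)
  refine ⟨p, Nat.find hex - 1, hp, not_finite_iff_infinite.mp (Nat.find_min hex (by omega)), ?_⟩
  rw [Nat.sub_add_cancel (Nat.one_le_iff_ne_zero.mpr hK)]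
  exact Nat.find_spec hex

theorem exists_independentModMultiples_of_socleAtHeight {p k : ℕ} (hp : p.Prime)
    (hinf : Infinite (socleAtHeight G p k)) (hfin : Finite (socleAtHeight G p (k + 1))) :
    ∃ v : ℕ → G, (∀ i, p ^ (k + 1) • v i = 0) ∧
      IndependentModMultiples (p ^ (k + 1)) p fun i => p ^ k • v i := by
  have : Fact p.Prime := ⟨hp⟩
  set S := socleAtHeight G p k
  set T := (socleAtHeight G p (k + 1)).addSubgroupOf S
  let _ : Module (ZMod p) (S ⧸ T) := AddCommGroup.zmodModule fun x => by
    induction x using QuotientAddGroup.induction_on with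
    | H w =>
      rw [← QuotientAddGroup.mk_nsmul, QuotientAddGroup.eq_zero_iff]
      have : p • w = 0 := Subtype.ext w.2.2
      rw [this]
      exact zero_mem T
  have : Finite T := Finite.of_injective
    (fun x : T => (⟨x.1.1, x.2⟩ : socleAtHeight G p (k + 1)))
    fun x y h => Subtype.ext (Subtype.ext (congrArg Subtype.val h :))
  have : Infinite (S ⧸ T) := T.infinite_quotient_of_finite
  obtain ⟨w, hw⟩ := exists_linearIndependent_nat (ZMod p) (S ⧸ T)
  choose w' hw' using fun i => QuotientAddGroup.mk_surjective (w i)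
  choose v hv using fun i => (w' i).2.1
  refine ⟨v, fun i => ?_, fun s b hb i hi => ?_⟩
  · rw [pow_succ, mul_nsmul, ← nsmulAddMonoidHom_apply (p ^ k), hv i]
    exact (w' i).2.2
  · rw [← ZMod.intCast_zmod_eq_zero_iff_dvd]
    refine linearIndependent_iff'.mp hw s (fun i => (b i : ZMod p)) ?_ i hi
    simp only [Int.cast_smul_eq_zsmul, ← hw', ← QuotientAddGroup.mk_zsmul,
      ← QuotientAddGroup.mk_sum]
    rw [QuotientAddGroup.eq_zero_iff, AddSubgroup.mem_addSubgroupOf]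
    refine ⟨?_, (∑ i ∈ s, b i • w' i).2.2⟩
    have hcoe : ((∑ i ∈ s, b i • w' i : S) : G) = ∑ i ∈ s, b i • (p ^ k • v i) := by
      push_cast
      simp_rw [← hv, nsmulAddMonoidHom_apply]
    rw [hcoe]
    exact hb

theorem IndependentModMultiples.of_pow_nsmul {ι : Type*} {p k : ℕ} {v : ι → G}
    (hv : IndependentModMultiples (p ^ (k + 1)) p fun i => p ^ k • v i) :
    IndependentModMultiples (p ^ (k + 1)) ((p ^ (k + 1) : ℕ) : ℤ) v := by
  intro s a ha
  push_cast
  -- If `p ^ j` divides every `a i`, multiplying the relation by `p ^ (k - j)` gives a relation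
  -- among the `p ^ k • v i` with coefficients `a i / p ^ j`, which are therefore divisible by `p`.
  suffices ∀ j ≤ k + 1, ∀ i ∈ s, (p : ℤ) ^ j ∣ a i from this _ le_rfl
  intro j hj
  induction j with
  | zero => simp
  | succ j ih =>
    have hc : ∀ i ∈ s, a i = (p : ℤ) ^ j * (a i / (p : ℤ) ^ j) :=
      fun i hi => (Int.mul_ediv_cancel' (ih (by omega) i hi)).symm
    have hsum : ∑ i ∈ s, (a i / (p : ℤ) ^ j) • (p ^ k • v i) =
        p ^ (k - j) • ∑ i ∈ s, a i • v i := by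
      rw [Finset.smul_sum]
      refine Finset.sum_congr rfl fun i hi => ?_
      conv_rhs => rw [hc i hi]
      rw [← natCast_zsmul, ← natCast_zsmul, smul_smul, smul_smul]
      congr 1
      push_cast
      rw [← pow_sub_mul_pow (p : ℤ) (by omega : j ≤ k)]
      ring
    intro i hi
    obtain ⟨g, hg⟩ := ha
    have hdvd := hv s _ ⟨p ^ (k - j) • g, by
      rw [hsum, ← hg]
      simp only [nsmulAddMonoidHom_apply]
      exact smul_comm _ _ _⟩ i hi
    rw [hc i hi, pow_succ]
    exact mul_dvd_mul_left _ hdvd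

theorem exists_finsupp_zmod_retract {Q : ℕ} (hQ : Q ≠ 0) (v : ℕ → G)
    (hvQ : ∀ i, Q • v i = 0) (hv : IndependentModMultiples Q Q v) :
    ∃ (α : (ℕ →₀ ZMod Q) →+ G) (β : G →+ (ℕ →₀ ZMod Q)), β.comp α = AddMonoidHom.id _ := by
  set QG := (nsmulAddMonoidHom Q : G →+ G).range
  let α : (ℕ →₀ ZMod Q) →+ G :=
    liftAddHom fun i => ZMod.lift Q ⟨zmultiplesHom G (v i), by simp [hvQ]⟩
  have hα : ∀ x, α x ∈ QG → x = 0 := by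
    intro x hx
    have hαx : α x = ∑ i ∈ x.support, ((x i).cast : ℤ) • v i := by
      rw [liftAddHom_apply, Finsupp.sum]
      refine Finset.sum_congr rfl fun i _ => ?_
      conv_lhs => rw [← ZMod.intCast_zmod_cast (x i)]
      rw [ZMod.lift_coe]
      rfl
    ext i
    by_cases hi : i ∈ x.support
    · rw [← ZMod.intCast_zmod_cast (x i), Finsupp.zero_apply, ZMod.intCast_zmod_eq_zero_iff_dvd]
      exact hv _ _ (hαx ▸ hx) i hi
    · simpa using hi
  let _ : Module (ZMod Q) (G ⧸ QG) := AddCommGroup.zmodModule fun x => by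
    induction x using QuotientAddGroup.induction_on with
    | H g => rw [← QuotientAddGroup.mk_nsmul, QuotientAddGroup.eq_zero_iff]; exact ⟨g, rfl⟩
  obtain ⟨β, hβ⟩ := exists_leftInverse_finsupp_zmod hQ ((QuotientAddGroup.mk' QG).comp α) <| by
    rw [injective_iff_map_eq_zero]
    intro x hx
    exact hα x ((QuotientAddGroup.eq_zero_iff _).mp hx)
  exact ⟨α, β.comp (QuotientAddGroup.mk' QG), hβ⟩

theorem exists_finsupp_zmod_retract_of_bounded [Infinite G] {c : ℕ} (hc : c ≠ 0)
    (hcG : ∀ x : G, c • x = 0) :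
    ∃ Q, 1 < Q ∧
      ∃ (α : (ℕ →₀ ZMod Q) →+ G) (β : G →+ (ℕ →₀ ZMod Q)), β.comp α = AddMonoidHom.id _ := by
  obtain ⟨p, k, hp, hinf, hfin⟩ := exists_socleAtHeight_infinite_finite hc hcG
  obtain ⟨v, hvQ, hv⟩ := exists_independentModMultiples_of_socleAtHeight hp hinf hfin
  exact ⟨p ^ (k + 1), Nat.one_lt_pow (by omega) hp.one_lt,
    exists_finsupp_zmod_retract (pow_ne_zero _ hp.ne_zero) v hvQ hv.of_pow_nsmul⟩

end BoundedGroup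

/-- For an abelian group `G`, the endomorphism ring `E(G)` is periodic if and only
if `G` is a finite group. -/
theorem end_abelianGroup_periodic_iff_finite (G : Type*) [AddCommGroup G] :
    IsPeriodicRing (AddMonoid.End G) ↔ Finite G := by
  refine ⟨fun hper => ?_, fun _ => ?_⟩
  · by_contra hfin
    have : Infinite G := not_finite_iff_infinite.mp hfin
    obtain ⟨c, hc, hcG⟩ := hper.exists_natCast_eq_zero
    obtain ⟨Q, hQ, α, β, hβα⟩ := exists_finsupp_zmod_retract_of_bounded hc fun x => by
      simpa using DFunLike.congr_fun hcG x
    have : Fact (1 < Q) := ⟨hQ⟩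
    exact not_isPeriodicRing_addMonoidEnd_finsupp (ZMod Q) (hper.addMonoidEnd_of_retract α β hβα)
  · have : Finite (AddMonoid.End G) := Finite.of_injective _ DFunLike.coe_injective
    exact IsPeriodicRing.of_finite _
end

section
/- Let k be a commutative ring and let A and B be k-algebras which are locally finite as rings (every finitely generated subring is finite, i.e., for every finite subset s the subring Subring.closure s is a finite set). Then the tensor product algebra A ⊗[k] B is locally finite as a ring. -/
open scoped TensorProduct

/-- A ring `R` is *locally finite* if every finitely generated subring of `R` is
finite: for every finite subset `s ⊆ R`, the subring generated by `s` is a finite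
set. -/
def IsLocallyFiniteRing (R : Type*) [Ring R] : Prop :=
  ∀ s : Finset R, ((Subring.closure (s : Set R) : Subring R) : Set R).Finite

/-! Each element of a locally finite ring has finite additive order. A finite subset of
`A ⊗[k] B` lies in the additive span of the pure tensors `a ⊗ₜ b` with `a`, `b` in the finite
subrings generated by finitely many components. Those pure tensors form a finite multiplicative
monoid of additive torsion elements, so their additive span is a finitely generated torsion
abelian group, hence finite, and it is a subring. -/

theorem AddSubgroup.closure_finite_of_isOfFinAddOrder {G : Type*} [AddCommGroup G] {s : Set G}
    (hs : s.Finite) (hs_tors : ∀ x ∈ s, IsOfFinAddOrder x) : (closure s : Set G).Finite := by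
  have : Finite s := hs.to_subtype
  have h_tors : IsAddTorsion (closure s) := fun x =>
    AddSubmonoid.isOfFinAddOrder_coe.mp ((closure_le (AddCommGroup.torsion G)).mpr hs_tors x.2)
  have : Finite (closure s) := AddCommGroup.finite_of_fg_isAddTorsion _ h_tors
  exact Set.toFinite _

theorem Subring.closure_finite_of_isOfFinAddOrder {R : Type*} [Ring R] {M : Submonoid R}
    (hM : (M : Set R).Finite) (hM_tors : ∀ x ∈ M, IsOfFinAddOrder x) :
    (closure (M : Set R) : Set R).Finite := by
  have h_eq : (closure (M : Set R) : Set R) = AddSubgroup.closure (M : Set R) := by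
    ext x
    rw [SetLike.mem_coe, mem_closure_iff, Submonoid.closure_eq, SetLike.mem_coe]
  rw [h_eq]
  exact AddSubgroup.closure_finite_of_isOfFinAddOrder hM hM_tors

theorem IsLocallyFiniteRing.isOfFinAddOrder {R : Type*} [Ring R] (hR : IsLocallyFiniteRing R)
    (a : R) : IsOfFinAddOrder a := by
  have : Finite (Subring.closure ({a} : Set R)) := by simpa using (hR {a}).to_subtype
  exact (Subring.closure ({a} : Set R)).subtype.toAddMonoidHom.isOfFinAddOrder
    (isOfFinAddOrder_of_finite ⟨a, Subring.subset_closure rfl⟩)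

namespace TensorProduct

variable {R M N : Type*} [CommSemiring R] [AddCommMonoid M] [AddCommMonoid N] [Module R M]
  [Module R N]

theorem _root_.IsOfFinAddOrder.tmul {m : M} (hm : IsOfFinAddOrder m) (n : N) :
    IsOfFinAddOrder (m ⊗ₜ[R] n) :=
  ((TensorProduct.mk R M N).flip n).toAddMonoidHom.isOfFinAddOrder hm

theorem exists_finset_subset_closure_image2_tmul (s : Finset (M ⊗[R] N)) :
    ∃ (sM : Finset M) (sN : Finset N),
      (s : Set (M ⊗[R] N)) ⊆
        AddSubmonoid.closure (Set.image2 (· ⊗ₜ[R] ·) (sM : Set M) (sN : Set N)) := by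
  classical
  choose T hT using fun x : M ⊗[R] N => exists_finset (R := R) x
  refine ⟨s.biUnion fun x => (T x).image Prod.fst, s.biUnion fun x => (T x).image Prod.snd,
    fun x hx => ?_⟩
  rw [SetLike.mem_coe, hT x]
  refine AddSubmonoid.sum_mem _ fun i hi => AddSubmonoid.subset_closure ?_
  exact Set.mem_image2_of_mem (by simpa using ⟨x, hx, i.2, hi⟩) (by simpa using ⟨x, hx, i.1, hi⟩)

end TensorProduct

namespace Algebra.TensorProduct

variable (R : Type*) {A B : Type*} [CommSemiring R] [Semiring A] [Semiring B] [Algebra R A]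
  [Algebra R B]

def tmulSubmonoid (S : Submonoid A) (T : Submonoid B) : Submonoid (A ⊗[R] B) where
  carrier := Set.image2 (· ⊗ₜ[R] ·) S T
  mul_mem' := by
    rintro _ _ ⟨a, ha, b, hb, rfl⟩ ⟨a', ha', b', hb', rfl⟩
    exact ⟨a * a', S.mul_mem ha ha', b * b', T.mul_mem hb hb', (tmul_mul_tmul a a' b b').symm⟩
  one_mem' := ⟨1, S.one_mem, 1, T.one_mem, rfl⟩

end Algebra.TensorProduct

/-- If `A` and `B` are `k`-algebras which are locally finite as rings, then the
tensor product `A ⊗[k] B` is locally finite as a ring. -/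
theorem locallyFinite_tensorProduct (k : Type*) [CommRing k]
    (A B : Type*) [Ring A] [Ring B] [Algebra k A] [Algebra k B]
    (hA : IsLocallyFiniteRing A) (hB : IsLocallyFiniteRing B) :
    IsLocallyFiniteRing (A ⊗[k] B) := by
  intro s
  obtain ⟨sA, sB, hs⟩ := TensorProduct.exists_finset_subset_closure_image2_tmul (R := k) s
  set M := Algebra.TensorProduct.tmulSubmonoid k
    (Subring.closure (sA : Set A)).toSubmonoid (Subring.closure (sB : Set B)).toSubmonoid
  have hM : (M : Set (A ⊗[k] B)).Finite := (hA sA).image2 _ (hB sB)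
  have hM_tors : ∀ x ∈ M, IsOfFinAddOrder x := by
    rintro _ ⟨a, -, b, -, rfl⟩
    exact (hA.isOfFinAddOrder a).tmul b
  have hs_sub : (s : Set (A ⊗[k] B)) ⊆ Subring.closure (M : Set (A ⊗[k] B)) := by
    refine hs.trans (AddSubmonoid.closure_le (S := (Subring.closure _).toAddSubmonoid) |>.mpr ?_)
    exact (Set.image2_subset Subring.subset_closure Subring.subset_closure).trans
      Subring.subset_closure
  exact (Subring.closure_finite_of_isOfFinAddOrder hM hM_tors).subset
    (Subring.closure_le.mpr hs_sub)
end
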